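/- arXiv:1806.05107 — 2 statements merged into one kernel-verified Lean document; each statement's English description precedes it below -/
import Mathlib

section
/- Let Δ be a (d-1)-dimensional Buchsbaum simplicial complex on n vertices such that H̃_i(Δ; K) ≠ 0 for some i ≥ 1. Then n ≥ 2d - i. -/
open Finset

/-! # Abstract simplicial complexes on vertex set `Fin n` -/

/-- A (nonempty) abstract simplicial complex on vertex set `Fin n`:
a collection of finite subsets containing `∅` and closed under taking subsets. -/
def IsComplex {n : ℕ} (Δ : Set (Finset (Fin n))) : Prop :=
  ∅ ∈ Δ ∧ ∀ F ∈ Δ, ∀ G ⊆ F, G ∈ Δ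

/-- The link of a face `F`. -/
def link {n : ℕ} (Δ : Set (Finset (Fin n))) (F : Finset (Fin n)) : Set (Finset (Fin n)) :=
  {G | Disjoint F G ∧ F ∪ G ∈ Δ}

/-- The dimension of a simplicial complex, as an integer (`-1` for the void/empty complex). -/
noncomputable def dimC {n : ℕ} (Δ : Set (Finset (Fin n))) : ℤ :=
  sSup ((fun F : Finset (Fin n) => (F.card : ℤ) - 1) '' Δ)

/-- `Δ` is pure with all facets of cardinality `d` (i.e. pure of dimension `d-1`):
there is a face of cardinality `d` and every face is contained in one. -/
def IsPure {n : ℕ} (Δ : Set (Finset (Fin n))) (d : ℕ) : Prop :=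
  (∃ F ∈ Δ, F.card = d) ∧ ∀ F ∈ Δ, ∃ G ∈ Δ, F ⊆ G ∧ G.card = d

/-- The Alexander dual `Δ^∨ = {F : [n] \ F ∉ Δ}`. -/
def dualC {n : ℕ} (Δ : Set (Finset (Fin n))) : Set (Finset (Fin n)) :=
  {F | Fᶜ ∉ Δ}

/-! ## Simplicial (reduced, augmented) chain complex and reduced homology -/

variable (K : Type) [Field K]

/-- The space of `k`-chains: formal `K`-linear combinations of faces of cardinality `k`
(`k = 0` gives the span of the empty face, playing the role of the augmentation). -/
abbrev Chains {n : ℕ} (Δ : Set (Finset (Fin n))) (k : ℕ) : Type :=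
  {F : Finset (Fin n) // F ∈ Δ ∧ F.card = k} →₀ K

/-- The boundary of a single face of cardinality `k+1`. -/
noncomputable def boundaryElt {n : ℕ} (Δ : Set (Finset (Fin n))) (k : ℕ)
    (F : {F : Finset (Fin n) // F ∈ Δ ∧ F.card = k + 1}) : Chains K Δ k :=
  ∑ v ∈ F.1.attach, open Classical in if h : F.1.erase v.1 ∈ Δ then
      ((-1 : K) ^ (F.1.filter (fun w => w < v.1)).card) •
        Finsupp.single ⟨F.1.erase v.1,
          ⟨h, by simp [Finset.card_erase_of_mem v.2, F.2.2]⟩⟩ 1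
    else 0

/-- The simplicial boundary map from `(k+1)`-chains to `k`-chains
(for `k = 0` this is the augmentation map). -/
noncomputable def boundaryMap {n : ℕ} (Δ : Set (Finset (Fin n))) (k : ℕ) :
    Chains K Δ (k + 1) →ₗ[K] Chains K Δ k :=
  Finsupp.lsum K fun F => LinearMap.toSpanSingleton K _ (boundaryElt K Δ k F)

/-- Vanishing of the `i`-th reduced simplicial homology of `Δ` with coefficients in `K`
(`i : ℤ`; for `i ≤ -2` the homology is trivially zero, `i = -1` concerns the augmentation). -/
noncomputable def ReducedHomologyZero {n : ℕ} (Δ : Set (Finset (Fin n))) (i : ℤ) : Prop :=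
  if i ≤ -2 then True
  else if i = -1 then Function.Surjective (boundaryMap K Δ 0)
  else LinearMap.ker (boundaryMap K Δ i.toNat) ≤ LinearMap.range (boundaryMap K Δ (i.toNat + 1))

/-! ## Cohen–Macaulay complexes (Reisner's criterion) and relatives -/

/-- `Δ` is Cohen–Macaulay over `K` (by Reisner's criterion). -/
noncomputable def IsCMComplex {n : ℕ} (Δ : Set (Finset (Fin n))) : Prop :=
  IsComplex Δ ∧ ∀ F ∈ Δ, ∀ i : ℤ, i < dimC (link Δ F) → ReducedHomologyZero K (link Δ F) i

/-- `Δ` is `CMₜ` over `K` with facets of cardinality `d`: it is pure and the link of every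
face of cardinality at least `t` is Cohen–Macaulay. -/
noncomputable def IsCMt {n : ℕ} (Δ : Set (Finset (Fin n))) (d t : ℕ) : Prop :=
  IsComplex Δ ∧ IsPure Δ d ∧ ∀ F ∈ Δ, t ≤ F.card → IsCMComplex K (link Δ F)

/-- `Δ` is Buchsbaum over `K` with facets of cardinality `d`: pure, and
`H̃ᵢ(link F; K) = 0` for every nonempty face `F` and `i < dim link F`. -/
noncomputable def IsBuchsbaum {n : ℕ} (Δ : Set (Finset (Fin n))) (d : ℕ) : Prop :=
  IsComplex Δ ∧ IsPure Δ d ∧ ∀ F ∈ Δ, F ≠ ∅ →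
    ∀ i : ℤ, i < dimC (link Δ F) → ReducedHomologyZero K (link Δ F) i

/-- Serre's condition `S_r`: `H̃ᵢ(link F; K) = 0` for all faces `F` and all
`i < min (r-1) (dim link F)`. -/
noncomputable def SerreS {n : ℕ} (Δ : Set (Finset (Fin n))) (r : ℤ) : Prop :=
  ∀ F ∈ Δ, ∀ i : ℤ, i < min (r - 1) (dimC (link Δ F)) → ReducedHomologyZero K (link Δ F) i
/-! ## Polynomial rings, Stanley–Reisner ideals, graded Betti numbers, depth -/

/-- The polynomial ring `K[x_1,…,x_n]`. -/
abbrev PolyR (K : Type) [Field K] (n : ℕ) := MvPolynomial (Fin n) K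

/-- The Stanley–Reisner ideal `I_Δ`, generated by the monomials supported on non-faces. -/
noncomputable def srIdeal {n : ℕ} (Δ : Set (Finset (Fin n))) : Ideal (PolyR K n) :=
  Ideal.span ((fun F : Finset (Fin n) => ∏ i ∈ F, MvPolynomial.X i) '' {F | F ∉ Δ})

section Koszul

variable (n : ℕ) (M : Type) [AddCommGroup M] [Module (PolyR K n) M]
  [Module K M] [IsScalarTower K (PolyR K n) M]

/-- The `i`-th term `M ⊗ Λⁱ(Kⁿ)` of the Koszul complex of `x_1,…,x_n` with values in `M`,
realized as finitely supported families indexed by `i`-subsets of `[n]`. -/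
abbrev KChains (i : ℕ) : Type := {S : Finset (Fin n) // S.card = i} →₀ M

/-- Multiplication by the variable `x_v`, as a `K`-linear endomorphism of `M`. -/
noncomputable def smulX (v : Fin n) : M →ₗ[K] M where
  toFun m := (MvPolynomial.X v : PolyR K n) • m
  map_add' a b := smul_add _ a b
  map_smul' c m := smul_comm (MvPolynomial.X v : PolyR K n) c m

/-- Koszul differential on a basis element. -/
noncomputable def kdElt (i : ℕ) (S : {S : Finset (Fin n) // S.card = i + 1}) :
    M →ₗ[K] KChains n M i :=
  ∑ v ∈ S.1.attach, ((-1 : K) ^ ((S.1.filter (fun w => w < v.1)).card)) •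
    ((Finsupp.lsingle (M := M) ⟨S.1.erase v.1, by
        simp [Finset.card_erase_of_mem v.2, S.2]⟩).comp (smulX K n M v.1))

/-- The Koszul differential `M ⊗ Λ^{i+1} → M ⊗ Λ^i` for the sequence `x_1,…,x_n`. -/
noncomputable def kd (i : ℕ) : KChains n M (i + 1) →ₗ[K] KChains n M i :=
  Finsupp.lsum K fun S => kdElt K n M i S

/-- The Koszul differential leaving homological degree `i` (the zero map for `i = 0`). -/
noncomputable def kdOut : ∀ i : ℕ, KChains n M i →ₗ[K] KChains n M (i - 1)
  | 0 => 0
  | (i + 1) => kd K n M i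

/-- The internal-degree-`j` part of the `i`-th Koszul chain module, with respect to a
grading `g` of `M` by `K`-subspaces (`e_S ⊗ m` has degree `|S| + deg m`). -/
def KCdeg (g : ℤ → Submodule K M) (i : ℕ) (j : ℤ) : Submodule K (KChains n M i) where
  carrier := {f | ∀ S, f S ∈ g (j - i)}
  add_mem' := fun hf hg S => by
    rw [Finsupp.add_apply]; exact add_mem (hf S) (hg S)
  zero_mem' := fun S => by rw [Finsupp.zero_apply]; exact zero_mem _
  smul_mem' := fun c f hf S => by
    rw [Finsupp.smul_apply]; exact Submodule.smul_mem _ c (hf S)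

/-- Vanishing of the graded Betti number `β_{i,j}(M) = dim_K Tor_i(M,K)_j`, expressed via
the Koszul complex of `x_1,…,x_n`: every internal-degree-`j` cycle in homological degree `i`
is a boundary. -/
noncomputable def BettiZero (g : ℤ → Submodule K M) (i : ℕ) (j : ℤ) : Prop :=
  ∀ f ∈ KCdeg K n M g i j, kdOut K n M i f = 0 → f ∈ LinearMap.range (kd K n M i)

end Koszul

/-- The grading of a homogeneous ideal `I ⊆ K[x_1,…,x_n]` by `K`-subspaces. -/
noncomputable def idealGrading {n : ℕ} (I : Ideal (PolyR K n)) (j : ℤ) : Submodule K ↥I :=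
  Submodule.comap ((Submodule.subtype I).restrictScalars K)
    (if 0 ≤ j then Submodule.restrictScalars K
        (MvPolynomial.homogeneousSubmodule (Fin n) K j.toNat) else ⊥)

/-- The grading of the quotient `K[x_1,…,x_n]/I` by a homogeneous ideal. -/
noncomputable def quotGrading {n : ℕ} (I : Ideal (PolyR K n)) (j : ℤ) :
    Submodule K (PolyR K n ⧸ I) :=
  Submodule.map ((Submodule.mkQ I).restrictScalars K)
    (if 0 ≤ j then Submodule.restrictScalars K
        (MvPolynomial.homogeneousSubmodule (Fin n) K j.toNat) else ⊥)

/-- The Green–Lazarsfeld property `N_{e,p}` for a homogeneous ideal `I`: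
`I` is generated in degree `e` and `β_{i,j}(I) = 0` for all `i < p` and `j ≠ i + e`. -/
noncomputable def PropertyN {n : ℕ} (I : Ideal (PolyR K n)) (e : ℕ) (p : ℤ) : Prop :=
  I = Ideal.span {f | f ∈ I ∧ MvPolynomial.IsHomogeneous f e} ∧
  ∀ (i : ℕ) (j : ℤ), (i : ℤ) < p → j ≠ (i : ℤ) + e →
    BettiZero K n ↥I (idealGrading K I) i j

/-- The graded maximal ideal `(x_1,…,x_n)`. -/
noncomputable def maxIdeal (n : ℕ) : Ideal (PolyR K n) :=
  Ideal.span (Set.range MvPolynomial.X)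

/-- `depth M ≥ k`: there exists an `M`-regular sequence of length at least `k` inside
the graded maximal ideal `(x_1,…,x_n)`. -/
noncomputable def DepthGE {n : ℕ} (M : Type) [AddCommGroup M] [Module (PolyR K n) M]
    (k : ℤ) : Prop :=
  ∃ rs : List (PolyR K n), k ≤ (rs.length : ℤ) ∧ (∀ r ∈ rs, r ∈ maxIdeal K n) ∧
    RingTheory.Sequence.IsRegular M rs

/-- The Stanley–Reisner ring `K[Δ]`. -/
abbrev SRRing {n : ℕ} (Δ : Set (Finset (Fin n))) : Type := PolyR K n ⧸ srIdeal K Δ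
/-! ## Graphs, cycles, chords, clique complexes, f-vectors -/

/-- The clique complex of a graph: faces are the (finite) cliques. -/
def cliqueComplexC {V : Type} (G : SimpleGraph V) : Set (Finset V) :=
  {F | G.IsClique ↑F}

/-- The 1-skeleton of a simplicial complex, as a simple graph. -/
def oneSkeleton {n : ℕ} (Δ : Set (Finset (Fin n))) : SimpleGraph (Fin n) where
  Adj a b := a ≠ b ∧ ({a, b} : Finset (Fin n)) ∈ Δ
  symm := ⟨fun a b h => ⟨h.1.symm, by rw [Finset.pair_comm]; exact h.2⟩⟩
  loopless := ⟨fun a h => h.1 rfl⟩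

/-- A cycle (walk) has a chord: an edge of `G` joining two vertices of the cycle
which is not an edge of the cycle. -/
def HasChord {V : Type} {G : SimpleGraph V} {v : V} (c : G.Walk v v) : Prop :=
  ∃ a b, a ∈ c.support ∧ b ∈ c.support ∧ G.Adj a b ∧ s(a, b) ∉ c.edges

/-- Every cycle of `G` of length at most `r` (and at least `4`, so that a chord can exist)
has a chord. -/
def ChordalUpTo {V : Type} (G : SimpleGraph V) (r : ℕ) : Prop :=
  ∀ ⦃v : V⦄ (c : G.Walk v v), c.IsCycle → 4 ≤ c.length → c.length ≤ r → HasChord c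

/-- `G` is chordal: every cycle of length at least 4 has a chord. -/
def IsChordalGraph {V : Type} (G : SimpleGraph V) : Prop :=
  ∀ ⦃v : V⦄ (c : G.Walk v v), c.IsCycle → 4 ≤ c.length → HasChord c

/-- `G` is bipartite. -/
def IsBipartite {V : Type} (G : SimpleGraph V) : Prop :=
  ∃ f : V → Bool, ∀ a b, G.Adj a b → f a ≠ f b

/-- The cycle graph on `m` vertices. -/
def cycleGraph (m : ℕ) : SimpleGraph (Fin m) where
  Adj a b := a ≠ b ∧ ((a.val + 1) % m = b.val ∨ (b.val + 1) % m = a.val)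
  symm := ⟨fun a b h => ⟨h.1.symm, h.2.symm⟩⟩
  loopless := ⟨fun a h => h.1 rfl⟩

/-- The edge ideal `I(G)` of a graph on `[n]`. -/
noncomputable def edgeIdeal {n : ℕ} (G : SimpleGraph (Fin n)) : Ideal (PolyR K n) :=
  Ideal.span {f | ∃ a b, G.Adj a b ∧ f = MvPolynomial.X a * MvPolynomial.X b}

/-- A homogeneous ideal generated in degree `e` has a linear resolution:
`β_{i,j} = 0` whenever `j ≠ i + e`. -/
noncomputable def HasLinearResolution {n : ℕ} (I : Ideal (PolyR K n)) (e : ℕ) : Prop :=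
  I = Ideal.span {f | f ∈ I ∧ MvPolynomial.IsHomogeneous f e} ∧
  ∀ (i : ℕ) (j : ℤ), j ≠ (i : ℤ) + e → BettiZero K n ↥I (idealGrading K I) i j

/-- The number of faces of `Δ` of cardinality `k` (so `faceCount Δ k = f_{k-1}`). -/
noncomputable def faceCount {n : ℕ} (Δ : Set (Finset (Fin n))) (k : ℕ) : ℕ :=
  Set.ncard {F | F ∈ Δ ∧ F.card = k}

/-- The set of facets (maximal faces) of `Δ`. -/
def facetSet {n : ℕ} (Δ : Set (Finset (Fin n))) : Set (Finset (Fin n)) :=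
  {F | F ∈ Δ ∧ ∀ G ∈ Δ, F ⊆ G → F = G}

/-- The complex on the vertices of the `r`-cycle whose facets are the complements
`V(C) \ {i, j}` of the non-adjacent (non-consecutive) pairs of vertices of the cycle. -/
def GammaC (r : ℕ) : Set (Finset (Fin r)) :=
  {G | ∃ i j : Fin r, i ≠ j ∧ ¬ (cycleGraph r).Adj i j ∧ G ⊆ ({i, j} : Finset (Fin r))ᶜ}

/-!
Write `Γ|S` for the faces of `Γ` avoiding `S`. Splitting a chain at a vertex `v` as
`v * b + x₀`, with `b` a chain of the link of `v` and `x₀` a chain avoiding `v`, turns statements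
about `Γ|S` into statements about `Γ|(S ∖ {v})` and `(link v)|(S ∖ {v})`. By induction on `|S|`
this gives `H̃ⱼ(Γ|S) = 0` for a Cohen–Macaulay `Γ` with facets of size `e` whenever
`j + |S| + 2 ≤ e`; and if all vertex links of `Δ` (facets of size `d`) are Cohen–Macaulay, it
moves every `j`-cycle of `Δ`, `j ≥ 1`, within its homology class onto `Δ|S` whenever
`j + |S| + 1 ≤ d`. If `n < 2d - i`, the complement `S` of a facet `G` satisfies this, so every
`i`-cycle is homologous to a cycle of the simplex `G`, which bounds, and `H̃ᵢ(Δ) = 0`.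
-/

section Complexes

variable {n : ℕ} {Γ : Set (Finset (Fin n))} {v : Fin n}

def deletion (Γ : Set (Finset (Fin n))) (S : Finset (Fin n)) : Set (Finset (Fin n)) :=
  {F | F ∈ Γ ∧ Disjoint F S}

@[simp] lemma deletion_empty : deletion Γ ∅ = Γ := by
  simp [deletion]

@[simp] lemma empty_deletion (S : Finset (Fin n)) : deletion ∅ S = ∅ := by
  simp [deletion]

lemma deletion_insert (S : Finset (Fin n)) :
    deletion Γ (insert v S) = deletion Γ S ∩ {G | v ∉ G} := by
  ext G
  simp only [deletion, Set.mem_ofPred_eq, Set.mem_inter_iff, disjoint_insert_right]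
  tauto

lemma deletion_subset_deletion {S T : Finset (Fin n)} (h : S ⊆ T) :
    deletion Γ T ⊆ deletion Γ S :=
  fun _ hF => ⟨hF.1, hF.2.mono_right h⟩

lemma deletion_subset_setOf_notMem {S : Finset (Fin n)} (hv : v ∈ S) :
    deletion Γ S ⊆ {G | v ∉ G} :=
  fun _ hF hvF => disjoint_left.1 hF.2 hvF hv

lemma mem_link_singleton {G : Finset (Fin n)} :
    G ∈ link Γ {v} ↔ v ∉ G ∧ insert v G ∈ Γ := by
  simp [link]

@[simp] lemma link_empty : link Γ ∅ = Γ := by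
  simp [link]

lemma link_link {F : Finset (Fin n)} (hF : Disjoint {v} F) :
    link (link Γ {v}) F = link Γ ({v} ∪ F) := by
  ext G
  simp only [link, Set.mem_ofPred_eq, disjoint_union_left, disjoint_union_right, union_assoc]
  tauto

lemma link_deletion_subset (S : Finset (Fin n)) :
    link (deletion Γ S) {v} ⊆ deletion (link Γ {v}) S := by
  intro G hG
  simp only [mem_link_singleton, deletion, Set.mem_ofPred_eq] at hG ⊢
  exact ⟨⟨hG.1, hG.2.1⟩, hG.2.2.mono_left (subset_insert v G)⟩

namespace IsComplex

variable (hC : IsComplex Γ)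
include hC

lemma link_eq_empty (hv : {v} ∉ Γ) : link Γ {v} = ∅ :=
  Set.eq_empty_of_forall_notMem fun _ hG => hv (hC.2 _ hG.2 _ subset_union_left)

lemma deletion_link_subset (S : Finset (Fin n)) :
    deletion (link Γ {v}) S ⊆ deletion Γ (insert v S) := by
  rw [deletion_insert]
  rintro G ⟨hG, hGS⟩
  rw [mem_link_singleton] at hG
  exact ⟨⟨hC.2 _ hG.2 _ (subset_insert v G), hGS⟩, hG.1⟩

lemma insert_mem_deletion_compl {G F : Finset (Fin n)} (hG : G ∈ Γ) (hv : v ∈ G)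
    (hF : F ∈ deletion Γ Gᶜ) : insert v F ∈ deletion Γ Gᶜ := by
  have hFG : insert v F ⊆ G := insert_subset hv fun _ hx => by
    simpa using disjoint_left.1 hF.2 hx
  exact ⟨hC.2 G hG _ hFG, disjoint_compl_right.mono_left hFG⟩

protected lemma link (hv : {v} ∈ Γ) : IsComplex (link Γ {v}) :=
  ⟨⟨disjoint_empty_right _, by simpa using hv⟩, fun _ hF _ hGF =>
    ⟨hF.1.mono_right hGF, hC.2 _ hF.2 _ (union_subset_union_right hGF)⟩⟩

end IsComplex

lemma IsCMComplex.link {K : Type} [Field K] (hCM : IsCMComplex K Γ) (hv : {v} ∈ Γ) :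
    IsCMComplex K (link Γ {v}) := by
  refine ⟨hCM.1.link hv, fun F hF i hi => ?_⟩
  rw [link_link hF.1] at hi ⊢
  exact hCM.2 _ hF.2 i hi

lemma IsPure.link {d : ℕ} (hP : IsPure Γ d) (hv : {v} ∈ Γ) :
    IsPure (_root_.link Γ {v}) (d - 1) := by
  have key : ∀ F ∈ _root_.link Γ {v},
      ∃ G ∈ _root_.link Γ {v}, F ⊆ G ∧ G.card = d - 1 := by
    intro F hF
    rw [mem_link_singleton] at hF
    obtain ⟨G, hG, hFG, hGd⟩ := hP.2 _ hF.2
    have hvG : v ∈ G := hFG (mem_insert_self v F)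
    refine ⟨G.erase v, ?_, ?_, by rw [card_erase_of_mem hvG, hGd]⟩
    · rw [mem_link_singleton, insert_erase hvG]
      exact ⟨notMem_erase v G, hG⟩
    · exact subset_erase.2 ⟨(subset_insert v F).trans hFG, hF.1⟩
  obtain ⟨G, hG, -, hGd⟩ := key ∅ ⟨disjoint_empty_right _, by simpa using hv⟩
  exact ⟨⟨G, hG, hGd⟩, key⟩

lemma IsPure.dimC_eq {d : ℕ} (hP : IsPure Γ d) : dimC Γ = d - 1 := by
  obtain ⟨⟨G, hG, hGd⟩, hmax⟩ := hP
  have hle : ∀ x ∈ (fun F : Finset (Fin n) => (F.card : ℤ) - 1) '' Γ, x ≤ d - 1 := by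
    rintro _ ⟨F, hF, rfl⟩
    obtain ⟨G', -, hFG', hG'd⟩ := hmax F hF
    have := card_le_card hFG'
    dsimp only
    omega
  exact le_antisymm (csSup_le ⟨_, G, hG, rfl⟩ hle)
    (le_csSup ⟨_, hle⟩ ⟨G, hG, by simp [hGd]⟩)

end Complexes

/-- Chains of the full simplex on `Fin n`, graded by the number `k` of vertices of a face; the
chains of a subcomplex `Γ` form the submodule `SimplexChain.supported R Γ k`. -/
abbrev SimplexChain (R : Type*) [CommRing R] (n k : ℕ) : Type _ :=
  {F : Finset (Fin n) // F.card = k} →₀ R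

noncomputable section

namespace SimplexChain

variable {R : Type*} [CommRing R] {n k : ℕ} {Γ Γ' : Set (Finset (Fin n))} {v : Fin n}
  {G : Finset (Fin n)}

/-- Zero unless `G.card = k`. -/
def face (k : ℕ) (G : Finset (Fin n)) : SimplexChain R n k :=
  if h : G.card = k then Finsupp.single ⟨G, h⟩ 1 else 0

variable (R) in
def orientSign (G : Finset (Fin n)) (v : Fin n) : R :=
  (-1) ^ #{w ∈ G | w < v}

def boundary (k : ℕ) : SimplexChain R n (k + 1) →ₗ[R] SimplexChain R n k :=
  Finsupp.linearCombination R fun F => ∑ v ∈ F.1, orientSign R F.1 v • face k (F.1.erase v)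

def cone (v : Fin n) (k : ℕ) : SimplexChain R n k →ₗ[R] SimplexChain R n (k + 1) :=
  Finsupp.linearCombination R fun G =>
    if v ∈ G.1 then 0 else orientSign R G.1 v • face (k + 1) (insert v G.1)

def uncone (v : Fin n) (k : ℕ) : SimplexChain R n (k + 1) →ₗ[R] SimplexChain R n k :=
  Finsupp.linearCombination R fun F =>
    if v ∈ F.1 then orientSign R F.1 v • face k (F.1.erase v) else 0

variable (R) in
def supported (Γ : Set (Finset (Fin n))) (k : ℕ) : Submodule R (SimplexChain R n k) :=
  Finsupp.supported R R {F | F.1 ∈ Γ}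

lemma single_eq_face (F : {F : Finset (Fin n) // F.card = k}) :
    Finsupp.single F (1 : R) = face k F.1 := by
  simp [face, F.2]

lemma face_of_card_ne (h : G.card ≠ k) : (face k G : SimplexChain R n k) = 0 :=
  dif_neg h

lemma orientSign_mul_self (G : Finset (Fin n)) (v : Fin n) :
    orientSign R G v * orientSign R G v = 1 := by
  simp [orientSign, ← pow_add, ← two_mul, pow_mul]

lemma orientSign_insert_self (G : Finset (Fin n)) (v : Fin n) :
    orientSign R (insert v G) v = orientSign R G v := by
  simp [orientSign, filter_insert]

lemma orientSign_erase_self (G : Finset (Fin n)) (v : Fin n) :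
    orientSign R (G.erase v) v = orientSign R G v := by
  simp [orientSign, filter_erase, erase_eq_of_notMem]

lemma orientSign_insert {w : Fin n} (hv : v ∉ G) :
    orientSign R (insert v G) w = (if v < w then -1 else 1) * orientSign R G w := by
  by_cases h : v < w
  · have : v ∉ G.filter (· < w) := fun hc => hv (mem_filter.1 hc).1
    simp [orientSign, filter_insert, h, card_insert_of_notMem this, pow_succ, mul_comm]
  · simp [orientSign, filter_insert, h]

lemma orientSign_erase {w : Fin n} (hw : w ∈ G) :
    orientSign R (G.erase w) v = (if w < v then -1 else 1) * orientSign R G v := by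
  by_cases h : w < v
  · have hmem : w ∈ G.filter (· < v) := mem_filter.2 ⟨hw, h⟩
    obtain ⟨m, hm⟩ := Nat.exists_eq_add_one_of_ne_zero (card_pos.2 ⟨w, hmem⟩).ne'
    simp [orientSign, filter_erase, card_erase_of_mem hmem, hm, h, pow_succ]
  · rw [orientSign, orientSign, filter_erase, if_neg h, one_mul,
      erase_eq_of_notMem (s := G.filter (· < v)) fun hc => h (mem_filter.1 hc).2]

lemma boundary_face (h : G.card = k + 1) :
    boundary k (face (k + 1) G : SimplexChain R n _) =
      ∑ v ∈ G, orientSign R G v • face k (G.erase v) := by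
  simp [face, h, boundary]

lemma cone_face (v : Fin n) (G : Finset (Fin n)) :
    cone v k (face k G : SimplexChain R n k) =
      if v ∈ G then 0 else orientSign R G v • face (k + 1) (insert v G) := by
  by_cases h : G.card = k
  · simp [face, h, cone]
  · split_ifs with hv
    · rw [face_of_card_ne h, map_zero]
    · rw [face_of_card_ne h, map_zero, face_of_card_ne, smul_zero]
      rwa [card_insert_of_notMem hv, Ne, add_left_inj]

lemma uncone_face (v : Fin n) (G : Finset (Fin n)) :
    uncone v k (face (k + 1) G : SimplexChain R n (k + 1)) =
      if v ∈ G then orientSign R G v • face k (G.erase v) else 0 := by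
  by_cases h : G.card = k + 1
  · simp [face, h, uncone]
  · split_ifs with hv
    · rw [face_of_card_ne h, map_zero, face_of_card_ne, smul_zero]
      have := card_pos.2 ⟨v, hv⟩
      rw [card_erase_of_mem hv]
      omega
    · rw [face_of_card_ne h, map_zero]

lemma cone_uncone_face (hv : v ∈ G) :
    cone v k (uncone v k (face (k + 1) G : SimplexChain R n (k + 1))) = face (k + 1) G := by
  rw [uncone_face, if_pos hv, map_smul, cone_face, if_neg (notMem_erase v G),
    orientSign_erase_self, insert_erase hv, smul_smul, orientSign_mul_self, one_smul]

lemma uncone_cone_face (hv : v ∉ G) :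
    uncone v k (cone v k (face k G : SimplexChain R n k)) = face k G := by
  rw [cone_face, if_neg hv, map_smul, uncone_face, if_pos (mem_insert_self v G),
    orientSign_insert_self, erase_insert hv, smul_smul, orientSign_mul_self, one_smul]

lemma boundary_cone_face (hv : v ∉ G) (hG : G.card = k + 1) :
    boundary (k + 1) (cone v (k + 1) (face (k + 1) G : SimplexChain R n (k + 1))) =
      face (k + 1) G - cone v k (boundary k (face (k + 1) G)) := by
  rw [cone_face, if_neg hv, map_smul, boundary_face (by rw [card_insert_of_notMem hv, hG]),
    sum_insert hv, erase_insert hv, orientSign_insert_self, smul_add, smul_smul,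
    orientSign_mul_self, one_smul, boundary_face hG, map_sum, sub_eq_add_neg,
    ← sum_neg_distrib, smul_sum]
  congr 1
  refine sum_congr rfl fun w hw => ?_
  have hwv : w ≠ v := fun h => hv (h ▸ hw)
  rw [map_smul, cone_face, if_neg fun h => hv (mem_of_mem_erase h),
    erase_insert_of_ne hwv.symm, smul_smul, smul_smul, ← neg_smul,
    orientSign_insert hv, orientSign_erase hw]
  congr 1
  rcases hwv.lt_or_gt with h | h
  · rw [if_neg (asymm h), if_pos h]; ring
  · rw [if_pos h, if_neg (asymm h)]; ring

lemma supported_mono (h : Γ ⊆ Γ') : supported R Γ k ≤ supported R Γ' k :=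
  Finsupp.supported_mono fun _ hF => h hF

@[simp] lemma supported_empty : supported R (∅ : Set (Finset (Fin n))) k = ⊥ := by
  simp [supported]

lemma face_mem_supported (hG : G ∈ Γ) :
    (face k G : SimplexChain R n k) ∈ supported R Γ k := by
  unfold face
  split_ifs
  · exact Finsupp.single_mem_supported R 1 hG
  · exact zero_mem _

lemma supported_eq_span_face (Γ : Set (Finset (Fin n))) (k : ℕ) :
    supported R Γ k = Submodule.span R ((face k ·) '' {G | G ∈ Γ ∧ G.card = k}) := by
  rw [supported, Finsupp.supported_eq_span_single]
  congr 1
  ext x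
  constructor
  · rintro ⟨F, hF, rfl⟩
    exact ⟨F.1, ⟨hF, F.2⟩, (single_eq_face F).symm⟩
  · rintro ⟨G, ⟨hG, hGk⟩, rfl⟩
    exact ⟨⟨G, hGk⟩, hG, single_eq_face _⟩

lemma map_mem_supported {l : ℕ} (L : SimplexChain R n k →ₗ[R] SimplexChain R n l)
    (h : ∀ G ∈ Γ, G.card = k → L (face k G) ∈ supported R Γ' l) {x : SimplexChain R n k}
    (hx : x ∈ supported R Γ k) : L x ∈ supported R Γ' l := by
  rw [supported_eq_span_face] at hx
  refine (Submodule.span_le (p := (supported R Γ' l).comap L)).2 ?_ hx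
  rintro _ ⟨G, ⟨hG, hGk⟩, rfl⟩
  exact h G hG hGk

lemma eqOn_supported {M : Type*} [AddCommGroup M] [Module R M]
    {L L' : SimplexChain R n k →ₗ[R] M}
    (h : ∀ G ∈ Γ, G.card = k → L (face k G) = L' (face k G)) :
    Set.EqOn L L' (supported R Γ k) := by
  rw [supported_eq_span_face]
  refine LinearMap.eqOn_span' ?_
  rintro _ ⟨G, ⟨hG, hGk⟩, rfl⟩
  exact h G hG hGk

lemma boundary_mem_supported (hΓ : ∀ F ∈ Γ, ∀ w ∈ F, F.erase w ∈ Γ)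
    {x : SimplexChain R n (k + 1)} (hx : x ∈ supported R Γ (k + 1)) :
    boundary k x ∈ supported R Γ k :=
  map_mem_supported _ (fun F hF hFk => by
    rw [boundary_face hFk]
    exact sum_mem fun w hw => Submodule.smul_mem _ _ (face_mem_supported (hΓ F hF w hw))) hx

lemma cone_mem_supported (hΓ : ∀ G ∈ Γ, v ∉ G → insert v G ∈ Γ')
    {x : SimplexChain R n k} (hx : x ∈ supported R Γ k) :
    cone v k x ∈ supported R Γ' (k + 1) :=
  map_mem_supported _ (fun G hG _ => by
    rw [cone_face]
    split_ifs with hv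
    · exact zero_mem _
    · exact Submodule.smul_mem _ _ (face_mem_supported (hΓ G hG hv))) hx

lemma cone_mem_supported_setOf_mem (x : SimplexChain R n k) :
    cone v k x ∈ supported R {G | v ∈ G} (k + 1) :=
  cone_mem_supported (Γ := Set.univ) (fun G _ _ => mem_insert_self v G) (by simp [supported])

lemma uncone_mem_supported (hΓ : ∀ F ∈ Γ, v ∈ F → F.erase v ∈ Γ')
    {x : SimplexChain R n (k + 1)} (hx : x ∈ supported R Γ (k + 1)) :
    uncone v k x ∈ supported R Γ' k :=
  map_mem_supported _ (fun F hF _ => by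
    rw [uncone_face]
    split_ifs with hv
    · exact Submodule.smul_mem _ _ (face_mem_supported (hΓ F hF hv))
    · exact zero_mem _) hx

lemma cone_uncone {x : SimplexChain R n (k + 1)}
    (hx : x ∈ supported R {G | v ∈ G} (k + 1)) :
    cone v k (uncone v k x) = x :=
  eqOn_supported (L := (cone v k).comp (uncone v k)) (L' := .id)
    (fun _ hG _ => cone_uncone_face hG) hx

lemma uncone_cone {x : SimplexChain R n k} (hx : x ∈ supported R {G | v ∉ G} k) :
    uncone v k (cone v k x) = x :=
  eqOn_supported (L := (uncone v k).comp (cone v k)) (L' := .id)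
    (fun _ hG _ => uncone_cone_face hG) hx

lemma uncone_eq_zero {x : SimplexChain R n (k + 1)}
    (hx : x ∈ supported R {G | v ∉ G} (k + 1)) :
    uncone v k x = 0 :=
  eqOn_supported (L := uncone v k) (L' := 0)
    (fun _ hG _ => by rw [uncone_face, if_neg hG, LinearMap.zero_apply]) hx

lemma boundary_cone {x : SimplexChain R n (k + 1)}
    (hx : x ∈ supported R {G | v ∉ G} (k + 1)) :
    boundary (k + 1) (cone v (k + 1) x) = x - cone v k (boundary k x) :=
  eqOn_supported (L := (boundary (k + 1)).comp (cone v (k + 1)))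
    (L' := .id - (cone v k).comp (boundary k)) (fun _ hG hGk => boundary_cone_face hG hGk) hx

lemma filter_mem_supported (p : Finset (Fin n) → Prop) [DecidablePred p]
    {x : SimplexChain R n k} (hx : x ∈ supported R Γ k) :
    x.filter (fun F => p F.1) ∈ supported R (Γ ∩ {G | p G}) k := fun F hF => by
  rw [Finset.mem_coe, Finsupp.support_filter, mem_filter] at hF
  exact ⟨hx hF.1, hF.2⟩

lemma exists_eq_cone_add (v : Fin n) {x : SimplexChain R n (k + 1)}
    (hx : x ∈ supported R Γ (k + 1)) :
    ∃ b ∈ supported R (link Γ {v}) k, ∃ x₀ ∈ supported R (Γ ∩ {G | v ∉ G}) (k + 1),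
      x = cone v k b + x₀ := by
  refine ⟨uncone v k x, uncone_mem_supported (fun F hF hvF => ?_) hx,
    x.filter fun F => v ∉ F.1, filter_mem_supported _ hx, ?_⟩
  · rw [mem_link_singleton, insert_erase hvF]
    exact ⟨notMem_erase v F, hF⟩
  have hsplit := Finsupp.filter_add_filter_not x (fun F => v ∈ F.1)
  have hcone : cone v k (uncone v k x) = x.filter fun F => v ∈ F.1 := by
    conv_lhs => rw [← hsplit, map_add,
      uncone_eq_zero (supported_mono Set.inter_subset_right (filter_mem_supported _ hx)),
      add_zero, cone_uncone (supported_mono Set.inter_subset_right (filter_mem_supported _ hx))]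
  rw [hcone, hsplit]

lemma boundary_cone_add {b : SimplexChain R n (k + 1)} {x₀ : SimplexChain R n (k + 2)}
    (hb : b ∈ supported R {G | v ∉ G} (k + 1))
    (hx₀ : x₀ ∈ supported R {G | v ∉ G} (k + 2))
    (h : boundary (k + 1) (cone v (k + 1) b + x₀) ∈ supported R {G | v ∉ G} (k + 1)) :
    boundary k b = 0 ∧
      boundary (k + 1) (cone v (k + 1) b + x₀) = b + boundary (k + 1) x₀ := by
  have herase : ∀ F ∈ {G : Finset (Fin n) | v ∉ G}, ∀ w ∈ F, F.erase w ∈ {G | v ∉ G} :=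
    fun _ hF _ _ hv => hF (mem_of_mem_erase hv)
  have hsplit : boundary (k + 1) (cone v (k + 1) b + x₀) =
      b - cone v k (boundary k b) + boundary (k + 1) x₀ := by
    rw [map_add, boundary_cone hb]
  -- the only term of `hsplit` with faces through `v`
  have hcone : cone v k (boundary k b) = 0 := by
    have hfree : cone v k (boundary k b) ∈ supported R {G | v ∉ G} (k + 1) := by
      rw [show cone v k (boundary k b) = b + boundary (k + 1) x₀ -
          boundary (k + 1) (cone v (k + 1) b + x₀) by rw [hsplit]; abel]
      exact sub_mem (add_mem hb (boundary_mem_supported herase hx₀)) h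
    ext F
    by_contra hF
    exact hfree (Finsupp.mem_support_iff.2 hF)
      (cone_mem_supported_setOf_mem _ (Finsupp.mem_support_iff.2 hF))
  have hb₀ : boundary k b = 0 := by
    rw [← uncone_cone (boundary_mem_supported herase hb), hcone, map_zero]
  exact ⟨hb₀, by rw [hsplit, hb₀, map_zero, sub_zero]⟩

variable (R) in
def AcyclicAt (Γ : Set (Finset (Fin n))) (k : ℕ) : Prop :=
  ∀ z ∈ supported R Γ (k + 1), boundary k z = 0 →
    ∃ w ∈ supported R Γ (k + 2), boundary (k + 1) w = z

lemma acyclicAt_empty : AcyclicAt R (∅ : Set (Finset (Fin n))) k := by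
  intro z hz _
  rw [supported_empty, Submodule.mem_bot] at hz
  exact ⟨0, zero_mem _, by rw [map_zero, hz]⟩

lemma acyclicAt_of_cone {u : Fin n} (hu : ∀ G ∈ Γ, insert u G ∈ Γ) :
    AcyclicAt R Γ (k + 1) := by
  intro z hz hzc
  obtain ⟨b, hb, z₀, hz₀, rfl⟩ := exists_eq_cone_add u hz
  have hlink : link Γ {u} ⊆ {G | u ∉ G} := fun G hG => (mem_link_singleton.1 hG).1
  obtain ⟨-, hbz₀⟩ := boundary_cone_add (supported_mono hlink hb)
    (supported_mono Set.inter_subset_right hz₀) (hzc ▸ zero_mem _)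
  refine ⟨cone u (k + 2) z₀,
    cone_mem_supported (fun G hG _ => hu G hG) (supported_mono Set.inter_subset_left hz₀), ?_⟩
  rw [boundary_cone (supported_mono Set.inter_subset_right hz₀),
    eq_neg_of_add_eq_zero_right (hbz₀.symm.trans hzc), map_neg, sub_neg_eq_add]
  exact add_comm _ _

end SimplexChain

end

open SimplexChain

section ReducedHomology

variable {n : ℕ} {Γ : Set (Finset (Fin n))} {k : ℕ}

noncomputable def chainsToSimplexChain (Γ : Set (Finset (Fin n))) (k : ℕ) :
    Chains K Γ k →ₗ[K] SimplexChain K n k :=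
  Finsupp.lmapDomain K K fun F => ⟨F.1, F.2.2⟩

variable {K}

lemma chainsToSimplexChain_injective : Function.Injective (chainsToSimplexChain K Γ k) :=
  Finsupp.mapDomain_injective fun _ _ h => Subtype.ext (congrArg Subtype.val h :)

lemma range_chainsToSimplexChain :
    LinearMap.range (chainsToSimplexChain K Γ k) = supported K Γ k := by
  rw [LinearMap.range_eq_map, ← Finsupp.supported_univ, chainsToSimplexChain,
    Finsupp.lmapDomain_supported, supported, Set.image_univ]
  congr 1
  ext F
  exact ⟨fun ⟨G, hG⟩ => hG ▸ G.2.1, fun hF => ⟨⟨F.1, hF, F.2⟩, rfl⟩⟩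

lemma chainsToSimplexChain_single (F : {F : Finset (Fin n) // F ∈ Γ ∧ F.card = k}) (a : K) :
    chainsToSimplexChain K Γ k (Finsupp.single F a) = a • face k F.1 := by
  rw [chainsToSimplexChain, Finsupp.lmapDomain_apply, Finsupp.mapDomain_single,
    ← single_eq_face ⟨F.1, F.2.2⟩, Finsupp.smul_single, smul_eq_mul, mul_one]

lemma chainsToSimplexChain_boundaryMap (hC : IsComplex Γ) (x : Chains K Γ (k + 1)) :
    chainsToSimplexChain K Γ k (boundaryMap K Γ k x) =
      boundary k (chainsToSimplexChain K Γ (k + 1) x) := by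
  induction x using Finsupp.induction_linear with
  | zero => simp
  | add x y hx hy => simp only [map_add, hx, hy]
  | single F a =>
    rw [boundaryMap, Finsupp.lsum_single, LinearMap.toSpanSingleton_apply, map_smul,
      chainsToSimplexChain_single, map_smul, boundary_face F.2.2, boundaryElt, map_sum,
      ← sum_attach F.1]
    congr 1
    refine sum_congr rfl fun v _ => ?_
    rw [dif_pos (hC.2 _ F.2.1 _ (erase_subset _ _)), map_smul, chainsToSimplexChain_single,
      one_smul]
    rfl

lemma reducedHomologyZero_iff_acyclicAt (hC : IsComplex Γ) (k : ℕ) :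
    ReducedHomologyZero K Γ k ↔ AcyclicAt K Γ k := by
  have hrange (k : ℕ) (z : SimplexChain K n k) :
      z ∈ supported K Γ k ↔ ∃ x, chainsToSimplexChain K Γ k x = z := by
    rw [← range_chainsToSimplexChain, LinearMap.mem_range]
  rw [ReducedHomologyZero, if_neg (by omega), if_neg (by omega), Int.toNat_natCast]
  constructor
  · rintro h _ hz hzc
    obtain ⟨x, rfl⟩ := (hrange _ _).1 hz
    obtain ⟨y, rfl⟩ := h <| chainsToSimplexChain_injective <| by
      rw [chainsToSimplexChain_boundaryMap hC, hzc, map_zero]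
    exact ⟨_, (hrange _ _).2 ⟨y, rfl⟩, (chainsToSimplexChain_boundaryMap hC y).symm⟩
  · intro h x hx
    obtain ⟨w, hw, hwx⟩ := h _ ((hrange _ _).2 ⟨x, rfl⟩) <| by
      rw [← chainsToSimplexChain_boundaryMap hC, LinearMap.mem_ker.1 hx, map_zero]
    obtain ⟨y, rfl⟩ := (hrange _ _).1 hw
    exact ⟨y, chainsToSimplexChain_injective <| by
      rw [chainsToSimplexChain_boundaryMap hC, hwx]⟩

end ReducedHomology

section VertexBound

variable {K} {n : ℕ}

lemma acyclicAt_deletion_link {Γ : Set (Finset (Fin n))} (hC : IsComplex Γ) {v : Fin n}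
    {S : Finset (Fin n)} {j : ℕ}
    (h : {v} ∈ Γ → AcyclicAt K (deletion (link Γ {v}) S) j) :
    AcyclicAt K (deletion (link Γ {v}) S) j := by
  by_cases hv : {v} ∈ Γ
  · exact h hv
  · rw [hC.link_eq_empty hv, empty_deletion]
    exact acyclicAt_empty

theorem IsCMComplex.acyclicAt_deletion {Γ : Set (Finset (Fin n))} {e j : ℕ}
    (hCM : IsCMComplex K Γ) (hP : IsPure Γ e) (S : Finset (Fin n)) (hS : j + #S + 2 ≤ e) :
    AcyclicAt K (deletion Γ S) j := by
  induction S using Finset.induction_on generalizing Γ e with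
  | empty =>
    rw [deletion_empty, ← reducedHomologyZero_iff_acyclicAt hCM.1]
    simpa using hCM.2 ∅ hCM.1.1 j (by rw [link_empty, hP.dimC_eq]; omega)
  | insert v S hvS ih =>
    rw [card_insert_of_notMem hvS] at hS
    have hlink : AcyclicAt K (deletion (_root_.link Γ {v}) S) j :=
      acyclicAt_deletion_link hCM.1 fun hv => ih (hCM.link hv) (hP.link hv) (by omega)
    have hfree := deletion_subset_setOf_notMem (Γ := Γ) (mem_insert_self v S)
    intro z hz hzc
    obtain ⟨η, hη, rfl⟩ := ih hCM hP (by omega) _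
      (supported_mono (deletion_subset_deletion (subset_insert v S)) hz) hzc
    obtain ⟨b, hb, η₀, hη₀, rfl⟩ := exists_eq_cone_add v hη
    rw [← deletion_insert] at hη₀
    replace hb := supported_mono (link_deletion_subset S) hb
    obtain ⟨hbc, hbη₀⟩ := boundary_cone_add
      (supported_mono ((hCM.1.deletion_link_subset S).trans hfree) hb)
      (supported_mono hfree hη₀) (supported_mono hfree hz)
    obtain ⟨c, hc, rfl⟩ := hlink b hb hbc
    exact ⟨c + η₀, add_mem (supported_mono (hCM.1.deletion_link_subset S) hc) hη₀,
      by rw [hbη₀, map_add]⟩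

theorem exists_homologous_mem_deletion {Δ : Set (Finset (Fin n))} {d j : ℕ} (hC : IsComplex Δ)
    (hP : IsPure Δ d) (hCM : ∀ v, {v} ∈ Δ → IsCMComplex K (link Δ {v}))
    (S : Finset (Fin n)) (hS : j + #S + 2 ≤ d) {z : SimplexChain K n (j + 2)}
    (hz : z ∈ supported K Δ (j + 2)) (hzc : boundary (j + 1) z = 0) :
    ∃ z' ∈ supported K (deletion Δ S) (j + 2), boundary (j + 1) z' = 0 ∧
      ∃ w ∈ supported K Δ (j + 3), boundary (j + 2) w = z - z' := by
  induction S using Finset.induction_on with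
  | empty => exact ⟨z, by rwa [deletion_empty], hzc, 0, zero_mem _, by rw [map_zero, sub_self]⟩
  | insert v S hvS ih =>
    rw [card_insert_of_notMem hvS] at hS
    obtain ⟨z', hz', hz'c, w, hw, hwz⟩ := ih (by omega)
    have hlink : AcyclicAt K (deletion (link Δ {v}) S) j :=
      acyclicAt_deletion_link hC fun hv =>
        (hCM v hv).acyclicAt_deletion (hP.link hv) S (by omega)
    have hfree := deletion_subset_setOf_notMem (Γ := Δ) (mem_insert_self v S)
    obtain ⟨b, hb, z₀, hz₀, rfl⟩ := exists_eq_cone_add v hz'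
    rw [← deletion_insert] at hz₀
    replace hb := supported_mono (link_deletion_subset S) hb
    obtain ⟨hbc, hbz₀⟩ := boundary_cone_add
      (supported_mono ((hC.deletion_link_subset S).trans hfree) hb)
      (supported_mono hfree hz₀) (hz'c ▸ zero_mem _)
    obtain ⟨c, hc, rfl⟩ := hlink b hb hbc
    have hcfree := supported_mono ((hC.deletion_link_subset S).trans hfree) hc
    refine ⟨z₀ + c, add_mem hz₀ (supported_mono (hC.deletion_link_subset S) hc), ?_,
      w - cone v (j + 2) c, sub_mem hw (cone_mem_supported (fun G hG _ => ?_) hc), ?_⟩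
    · rw [map_add, add_comm (boundary (j + 1) z₀), ← hbz₀, hz'c]
    · exact (mem_link_singleton.1 hG.1).2
    · -- `(v * b + z₀) - (z₀ + c) = v * ∂c - c = -∂(v * c)`
      rw [map_sub, hwz, boundary_cone hcfree]
      abel

end VertexBound

theorem buchsbaum_homology_vertex_bound_general (K : Type) [Field K] {n d : ℕ}
    (Δ : Set (Finset (Fin n)))
    (hB : IsCMt K Δ d 1) (i : ℕ) (hi : 1 ≤ i)
    (hH : ¬ ReducedHomologyZero K Δ (i : ℤ)) :
    2 * (d : ℤ) - i ≤ n := by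
  obtain ⟨hC, hP, hCM⟩ := hB
  obtain ⟨j, rfl⟩ : ∃ j, i = j + 1 := ⟨i - 1, by omega⟩
  obtain ⟨G, hG, hGd⟩ := hP.1
  have hdn : d ≤ n := hGd ▸ (card_le_univ G).trans_eq (Fintype.card_fin n)
  by_contra! hn
  obtain ⟨u, hu⟩ : G.Nonempty := card_pos.1 (by omega)
  refine hH <| (reducedHomologyZero_iff_acyclicAt hC _).2 fun z hz hzc => ?_
  obtain ⟨z', hz', hz'c, w, hw, hwz⟩ := exists_homologous_mem_deletion hC hP
    (fun v hv => hCM {v} hv (by simp)) Gᶜ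
    (by rw [card_compl, Fintype.card_fin, hGd]; omega) hz hzc
  obtain ⟨w', hw', rfl⟩ :=
    acyclicAt_of_cone (fun _ => hC.insert_mem_deletion_compl hG hu) z' hz' hz'c
  exact ⟨w + w', add_mem hw (supported_mono (fun F hF => hF.1) hw'),
    by rw [map_add, hwz, sub_add_cancel]⟩

/-- If `Δ` is a `(d-1)`-dimensional Buchsbaum complex on `n` vertices with
`H̃ᵢ(Δ; K) ≠ 0` for some `i ≥ 1`, then `n ≥ 2d - i`. -/
theorem buchsbaum_homology_vertex_bound (K : Type) [Field K] {n d : ℕ}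
    (Δ : Set (Finset (Fin n))) (hvert : ∀ v : Fin n, ({v} : Finset (Fin n)) ∈ Δ)
    (hB : IsCMt K Δ d 1) (i : ℕ) (hi : 1 ≤ i)
    (hH : ¬ ReducedHomologyZero K Δ (i : ℤ)) :
    2 * (d : ℤ) - i ≤ n :=
  buchsbaum_homology_vertex_bound_general K Δ hB i hi hH
end

section
/- Let C be a chord-less r-cycle (r ≥ 4) with vertex set V(C) = {v_1,...,v_r}, and let Γ be the simplicial complex whose facets are V(C) \ {v_i, v_j} for each pair {v_i, v_j} of non-adjacent vertices of C (i.e., edges of the complement of C). Then Γ is a pure (r-3)-dimensional complex, every subset of V(C) of cardinality at most r-3 is a face of Γ, Γ has exactly r(r-3)/2 facets, and the top h-vector entry h_{r-2}(Γ) = -1; in particular Γ is not Cohen-Macaulay over any field. -/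
open Finset

/-! ## Simplicial (reduced, augmented) chain complex and reduced homology -/

variable (K : Type) [Field K]

/-!
The facets of `Γ` are the complements of the `r(r-3)/2` non-edges of the cycle, and since the
cycle has no triangles every set of at most `r - 3` vertices misses some non-edge, so `Γ`
contains the full `(r-4)`-skeleton of the simplex. Hence `f_{i-1} = C(r, i)` for `i ≤ r - 3`, and
the alternating binomial sum gives `h_{r-2} = (C(r,2) - r) - C(r-1,2) = -1`.

On the other hand, if the reduced homology of a `(d-1)`-dimensional complex vanishes below
degree `d - 1` (as Reisner's criterion demands of a Cohen–Macaulay complex), then exactness of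
the augmented chain complex up to degree `d - 2` and rank–nullity give
`h_d = dim ker ∂_{d-1} ≥ 0`.
-/

section Complexes

variable {n : ℕ} {Δ : Set (Finset (Fin n))}

lemma link_empty_s9 (Δ : Set (Finset (Fin n))) : link Δ ∅ = Δ := by
  simp [link]

lemma card_sub_one_le_dimC {F : Finset (Fin n)} (hF : F ∈ Δ) : (F.card : ℤ) - 1 ≤ dimC Δ := by
  refine le_csSup ⟨n, ?_⟩ (Set.mem_image_of_mem _ hF)
  rintro _ ⟨G, -, rfl⟩
  have := card_le_univ G
  rw [Fintype.card_fin] at this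
  dsimp only
  omega

lemma IsPure.sub_one_le_dimC {d : ℕ} (h : IsPure Δ d) : (d : ℤ) - 1 ≤ dimC Δ := by
  obtain ⟨F, hF, rfl⟩ := h.1
  exact card_sub_one_le_dimC hF

lemma facetSet_eq_of_isPure {d : ℕ} (hpure : IsPure Δ d) (hcard : ∀ F ∈ Δ, F.card ≤ d) :
    facetSet Δ = {F | F ∈ Δ ∧ F.card = d} := by
  ext F
  constructor
  · rintro ⟨hF, hmax⟩
    obtain ⟨G, hG, hFG, hGd⟩ := hpure.2 F hF
    exact ⟨hF, hmax G hG hFG ▸ hGd⟩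
  · rintro ⟨hF, hFd⟩
    exact ⟨hF, fun G hG hFG => eq_of_subset_of_card_le hFG (hFd ▸ hcard G hG)⟩

lemma faceCount_eq_choose {k : ℕ} (h : ∀ F : Finset (Fin n), F.card = k → F ∈ Δ) :
    faceCount Δ k = n.choose k := by
  have : {F | F ∈ Δ ∧ F.card = k} = ↑(univ.powersetCard k : Finset (Finset (Fin n))) := by
    ext F
    simp only [Set.mem_ofPred, mem_coe, mem_powersetCard_univ]
    exact ⟨And.right, fun hF => ⟨h F hF, hF⟩⟩
  rw [faceCount, this, Set.ncard_coe_finset, card_powersetCard, card_univ, Fintype.card_fin]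

end Complexes

section TwoSets

variable {α : Type*} [DecidableEq α] {G : SimpleGraph α}

lemma pair_mem_indepSetSet_two {i j : α} :
    {i, j} ∈ G.indepSetSet 2 ↔ i ≠ j ∧ ¬ G.Adj i j := by
  by_cases hij : i = j
  · simp [hij, SimpleGraph.mem_indepSetSet_iff, SimpleGraph.isNIndepSet_iff]
  · simp [hij, SimpleGraph.mem_indepSetSet_iff, SimpleGraph.isNIndepSet_iff,
      SimpleGraph.isIndepSet_iff, Set.pairwise_pair, card_pair hij, G.adj_comm j i]

lemma pair_mem_cliqueSet_two {i j : α} :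
    {i, j} ∈ G.cliqueSet 2 ↔ i ≠ j ∧ G.Adj i j := by
  by_cases hij : i = j
  · simp [hij, SimpleGraph.mem_cliqueSet_iff, SimpleGraph.isNClique_iff]
  · simp [hij, SimpleGraph.mem_cliqueSet_iff, SimpleGraph.isNClique_iff, card_pair hij]

lemma ncard_indepSetSet_two_add_ncard_cliqueSet_two [Fintype α] :
    (G.indepSetSet 2).ncard + (G.cliqueSet 2).ncard = (Fintype.card α).choose 2 := by
  have hunion : G.indepSetSet 2 ∪ G.cliqueSet 2 = ↑(univ.powersetCard 2 : Finset (Finset α)) := by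
    ext s
    simp only [Set.mem_union, mem_coe, mem_powersetCard_univ]
    constructor
    · rintro (h | h)
      · exact (SimpleGraph.mem_indepSetSet_iff.1 h).card_eq
      · exact (SimpleGraph.mem_cliqueSet_iff.1 h).card_eq
    · intro h
      obtain ⟨i, j, hij, rfl⟩ := card_eq_two.1 h
      rw [pair_mem_indepSetSet_two, pair_mem_cliqueSet_two]
      tauto
  have hdisj : Disjoint (G.indepSetSet 2) (G.cliqueSet 2) := by
    refine Set.disjoint_left.2 fun s hs hs' => ?_
    obtain ⟨i, j, hij, rfl⟩ := card_eq_two.1 (SimpleGraph.mem_cliqueSet_iff.1 hs').card_eq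
    exact (pair_mem_indepSetSet_two.1 hs).2 (pair_mem_cliqueSet_two.1 hs').2
  rw [← Set.ncard_union_eq hdisj, hunion, Set.ncard_coe_finset, card_powersetCard, card_univ]

end TwoSets

section NonEdgeComplex

variable {n : ℕ} (G : SimpleGraph (Fin n))

def nonEdgeComplex : Set (Finset (Fin n)) :=
  {F | ∃ i j, i ≠ j ∧ ¬ G.Adj i j ∧ F ⊆ ({i, j} : Finset (Fin n))ᶜ}

variable {G}

lemma card_compl_pair {i j : Fin n} (hij : i ≠ j) : ({i, j} : Finset (Fin n))ᶜ.card = n - 2 := by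
  rw [card_compl, Fintype.card_fin, card_pair hij]

lemma card_le_of_mem_nonEdgeComplex {F : Finset (Fin n)} (hF : F ∈ nonEdgeComplex G) :
    F.card ≤ n - 2 := by
  obtain ⟨i, j, hij, -, hF⟩ := hF
  exact (card_le_card hF).trans_eq (card_compl_pair hij)

lemma isPure_nonEdgeComplex {i j : Fin n} (hij : i ≠ j) (hadj : ¬ G.Adj i j) :
    IsPure (nonEdgeComplex G) (n - 2) := by
  refine ⟨⟨_, ⟨i, j, hij, hadj, subset_rfl⟩, card_compl_pair hij⟩, ?_⟩
  rintro F ⟨i, j, hij, hadj, hF⟩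
  exact ⟨_, ⟨i, j, hij, hadj, subset_rfl⟩, hF, card_compl_pair hij⟩

/-- Three vertices outside `F` cannot be pairwise adjacent, so two of them form a non-edge
avoiding `F`. -/
lemma mem_nonEdgeComplex_of_card_add_three_le (hG : G.CliqueFree 3) {F : Finset (Fin n)}
    (hF : F.card + 3 ≤ n) : F ∈ nonEdgeComplex G := by
  obtain ⟨t, htF, ht⟩ := exists_subset_card_eq (s := Fᶜ) (n := 3)
    (by rw [card_compl, Fintype.card_fin]; omega)
  have : ¬ G.IsClique (t : Set (Fin n)) := fun h => hG t ⟨h, ht⟩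
  obtain ⟨i, hi, j, hj, hij, hadj⟩ : ∃ i ∈ t, ∃ j ∈ t, i ≠ j ∧ ¬ G.Adj i j := by
    simpa [SimpleGraph.IsClique, Set.Pairwise] using this
  refine ⟨i, j, hij, hadj, fun x hx => ?_⟩
  have hi := mem_compl.1 (htF hi)
  have hj := mem_compl.1 (htF hj)
  simp only [mem_compl, mem_insert, mem_singleton]
  rintro (rfl | rfl) <;> contradiction

lemma setOf_mem_nonEdgeComplex_card_eq :
    {F | F ∈ nonEdgeComplex G ∧ F.card = n - 2} = compl '' G.indepSetSet 2 := by
  ext F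
  constructor
  · rintro ⟨⟨i, j, hij, hadj, hF⟩, hFcard⟩
    refine ⟨{i, j}, pair_mem_indepSetSet_two.2 ⟨hij, hadj⟩, (eq_of_subset_of_card_le hF ?_).symm⟩
    rw [hFcard, card_compl_pair hij]
  · rintro ⟨e, he, rfl⟩
    obtain ⟨i, j, hij, rfl⟩ := card_eq_two.1 (SimpleGraph.mem_indepSetSet_iff.1 he).card_eq
    exact ⟨⟨i, j, hij, (pair_mem_indepSetSet_two.1 he).2, subset_rfl⟩, card_compl_pair hij⟩

lemma faceCount_nonEdgeComplex_sub_two :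
    faceCount (nonEdgeComplex G) (n - 2) = (G.indepSetSet 2).ncard := by
  rw [faceCount, setOf_mem_nonEdgeComplex_card_eq, Set.ncard_image_of_injective _ compl_injective]

lemma ncard_facetSet_nonEdgeComplex {i j : Fin n} (hij : i ≠ j) (hadj : ¬ G.Adj i j) :
    (facetSet (nonEdgeComplex G)).ncard = (G.indepSetSet 2).ncard := by
  rw [facetSet_eq_of_isPure (isPure_nonEdgeComplex hij hadj)
    fun _ => card_le_of_mem_nonEdgeComplex]
  exact faceCount_nonEdgeComplex_sub_two

end NonEdgeComplex

section Cycle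

variable {r : ℕ}

lemma cycleGraph_not_adj_zero_two (hr : 4 ≤ r) :
    ¬ (cycleGraph r).Adj ⟨0, by omega⟩ ⟨2, by omega⟩ := by
  rintro ⟨-, h | h⟩ <;>
    simp only [Nat.mod_eq_of_lt (show 0 + 1 < r by omega),
      Nat.mod_eq_of_lt (show 2 + 1 < r by omega)] at h <;>
    omega

variable [NeZero r]

lemma Fin.val_add_one_eq_ite (a : Fin r) :
    (a + 1).val = if a.val + 1 = r then 0 else a.val + 1 := by
  rw [Fin.val_add, Fin.val_one', Nat.add_mod_mod]
  split_ifs with h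
  · simp [h]
  · exact Nat.mod_eq_of_lt (by omega)

lemma cycleGraph_adj_iff {a b : Fin r} :
    (cycleGraph r).Adj a b ↔ a ≠ b ∧ (b = a + 1 ∨ a = b + 1) := by
  simp [cycleGraph, Fin.ext_iff, Fin.val_add, eq_comm]

lemma cycleGraph_cliqueFree_three (hr : 4 ≤ r) : (cycleGraph r).CliqueFree 3 := by
  intro s hs
  obtain ⟨a, b, c, hab, hac, hbc, rfl⟩ := SimpleGraph.is3Clique_iff.1 hs
  simp only [cycleGraph_adj_iff, Fin.ext_iff, Fin.val_add_one_eq_ite] at hab hac hbc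
  have := a.isLt; have := b.isLt; have := c.isLt
  split_ifs at hab hac hbc <;> omega

lemma cliqueSet_two_cycleGraph (hr : 2 ≤ r) :
    (cycleGraph r).cliqueSet 2 = Set.range fun a : Fin r => ({a, a + 1} : Finset (Fin r)) := by
  ext s
  constructor
  · intro hs
    obtain ⟨a, b, hab, rfl⟩ := card_eq_two.1 (SimpleGraph.mem_cliqueSet_iff.1 hs).card_eq
    rcases (cycleGraph_adj_iff.1 (pair_mem_cliqueSet_two.1 hs).2).2 with rfl | rfl
    · exact ⟨a, rfl⟩
    · exact ⟨b, pair_comm _ _⟩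
  · rintro ⟨a, rfl⟩
    have ha : a ≠ a + 1 := by
      simp only [ne_eq, Fin.ext_iff, Fin.val_add_one_eq_ite]
      split_ifs <;> omega
    exact pair_mem_cliqueSet_two.2 ⟨ha, cycleGraph_adj_iff.2 ⟨ha, .inl rfl⟩⟩

lemma ncard_cliqueSet_two_cycleGraph (hr : 3 ≤ r) : ((cycleGraph r).cliqueSet 2).ncard = r := by
  rw [cliqueSet_two_cycleGraph (by omega), Set.ncard_range_of_injective, Nat.card_eq_fintype_card,
    Fintype.card_fin]
  intro a b hab
  rw [← coe_inj, coe_pair, coe_pair, Set.pair_eq_pair_iff] at hab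
  rcases hab with ⟨h, -⟩ | ⟨rfl, h⟩
  · exact h
  · simp only [Fin.ext_iff, Fin.val_add_one_eq_ite] at h
    split_ifs at h <;> omega

lemma ncard_indepSetSet_two_cycleGraph_add (hr : 3 ≤ r) :
    ((cycleGraph r).indepSetSet 2).ncard + r = r.choose 2 := by
  have := ncard_indepSetSet_two_add_ncard_cliqueSet_two (G := cycleGraph r)
  rwa [ncard_cliqueSet_two_cycleGraph hr, Fintype.card_fin] at this

end Cycle

section Binomial

lemma alternating_sum_range_succ (f : ℕ → ℤ) (m : ℕ) :
    ∑ i ∈ range (m + 2), (-1 : ℤ) ^ (m + 1 - i) * f i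
      = f (m + 1) - ∑ i ∈ range (m + 1), (-1 : ℤ) ^ (m - i) * f i := by
  rw [sum_range_succ, Nat.sub_self, pow_zero, one_mul, sub_eq_neg_add, ← sum_neg_distrib]
  congr 1
  refine sum_congr rfl fun i hi => ?_
  rw [Nat.sub_add_comm (mem_range_succ_iff.1 hi), pow_succ]
  ring

lemma sum_range_neg_one_pow_sub_mul_choose (n m : ℕ) :
    ∑ i ∈ range (m + 1), (-1 : ℤ) ^ (m - i) * (n + 1).choose i = n.choose m := by
  induction m with
  | zero => simp
  | succ m ih =>
    rw [alternating_sum_range_succ (fun i => ((n + 1).choose i : ℤ)), ih, Nat.choose_succ_succ]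
    push_cast
    ring

lemma Nat.choose_two_eq_div_add {r : ℕ} (hr : 3 ≤ r) : r.choose 2 = r * (r - 3) / 2 + r := by
  obtain ⟨s, rfl⟩ : ∃ s, r = s + 3 := ⟨r - 3, by omega⟩
  rw [Nat.choose_two_right, Nat.add_sub_cancel, show s + 3 - 1 = s + 2 from rfl,
    show (s + 3) * (s + 2) = (s + 3) * s + (s + 3) * 2 by ring, Nat.add_mul_div_right _ _ two_pos]

end Binomial

section Signs

variable {α : Type*} [LinearOrder α] {F : Finset α} {v w : α}

lemma card_filter_lt_erase_of_lt (hwv : w < v) :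
    #((F.erase v).filter (· < w)) = #(F.filter (· < w)) := by
  rw [filter_erase, erase_eq_of_notMem fun hv => (mem_filter.1 hv).2.not_gt hwv]

lemma card_filter_lt_erase_add_one (hw : w ∈ F) (hwv : w < v) :
    #((F.erase w).filter (· < v)) + 1 = #(F.filter (· < v)) := by
  rw [filter_erase, card_erase_add_one (mem_filter.2 ⟨hw, hwv⟩)]

/-- The two signs with which `F \ {v, w}` occurs in `∂∂F` (via `F \ {v}` and via `F \ {w}`)
are opposite. -/
lemma neg_one_pow_card_filter_lt_erase {R : Type*} [CommRing R] (hv : v ∈ F) (hw : w ∈ F)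
    (hvw : v ≠ w) :
    (-1 : R) ^ #(F.filter (· < v)) * (-1) ^ #((F.erase v).filter (· < w))
      + (-1) ^ #(F.filter (· < w)) * (-1) ^ #((F.erase w).filter (· < v)) = 0 := by
  wlog h : v < w generalizing v w
  · rw [add_comm]
    exact this hw hv hvw.symm (lt_of_le_of_ne (not_lt.1 h) hvw.symm)
  rw [card_filter_lt_erase_of_lt h, ← card_filter_lt_erase_add_one hv h, pow_succ]
  ring

end Signs

section Homology

variable {K} {n : ℕ} {Δ : Set (Finset (Fin n))}

/-- The top entry `h_d = ∑_{i ≤ d} (-1)^(d-i) f_{i-1}` of the `h`-vector of a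
`(d-1)`-dimensional complex. -/
noncomputable def hTop (Δ : Set (Finset (Fin n))) (d : ℕ) : ℤ :=
  ∑ i ∈ range (d + 1), (-1 : ℤ) ^ (d - i) * faceCount Δ i

lemma hTop_succ (Δ : Set (Finset (Fin n))) (d : ℕ) :
    hTop Δ (d + 1) = faceCount Δ (d + 1) - hTop Δ d :=
  alternating_sum_range_succ (fun i => (faceCount Δ i : ℤ)) d

lemma finrank_chains (Δ : Set (Finset (Fin n))) (k : ℕ) :
    Module.finrank K (Chains K Δ k) = faceCount Δ k := by
  rw [Module.finrank_eq_nat_card_basis Finsupp.basisSingleOne, faceCount, ← Nat.card_coe_set_eq]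
  rfl

lemma boundaryMap_single_one (k : ℕ) (F : {F : Finset (Fin n) // F ∈ Δ ∧ F.card = k + 1}) :
    boundaryMap K Δ k (Finsupp.single F 1) = boundaryElt K Δ k F := by
  rw [boundaryMap, Finsupp.lsum_single, LinearMap.toSpanSingleton_apply_one]

lemma boundaryElt_of_isComplex (hΔ : IsComplex Δ) (k : ℕ)
    (F : {F : Finset (Fin n) // F ∈ Δ ∧ F.card = k + 1}) :
    boundaryElt K Δ k F = ∑ v ∈ F.1.attach,
      ((-1 : K) ^ #(F.1.filter (· < v.1))) •
        Finsupp.single ⟨F.1.erase v.1, hΔ.2 _ F.2.1 _ (erase_subset _ _),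
          by rw [card_erase_of_mem v.2, F.2.2, Nat.add_sub_cancel]⟩ 1 :=
  sum_congr rfl fun _ _ => dif_pos (hΔ.2 _ F.2.1 _ (erase_subset _ _))

lemma boundaryMap_comp_boundaryMap (hΔ : IsComplex Δ) (k : ℕ) :
    (boundaryMap K Δ k).comp (boundaryMap K Δ (k + 1)) = 0 := by
  refine Finsupp.lhom_ext' fun F => LinearMap.ext_ring ?_
  simp only [LinearMap.comp_apply, Finsupp.lsingle_apply, LinearMap.zero_apply]
  rw [boundaryMap_single_one, boundaryElt_of_isComplex hΔ, map_sum]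
  simp_rw [map_smul, boundaryMap_single_one, boundaryElt_of_isComplex hΔ, smul_sum, smul_smul]
  rw [sum_sigma']
  -- the term for removing `v` then `w` cancels the term for removing `w` then `v`
  refine sum_involution (fun p _ => ⟨⟨p.2.1, mem_of_mem_erase p.2.2⟩,
      ⟨p.1.1, mem_erase.2 ⟨(ne_of_mem_erase p.2.2).symm, p.1.2⟩⟩⟩)
    (fun p _ => ?_) (fun p _ _ h => ne_of_mem_erase p.2.2 (congrArg (fun q => q.1.1) h))
    (fun p _ => by simp) (fun p _ => rfl)
  dsimp only
  simp only [erase_right_comm (s := (F : Finset (Fin n))) (a := (p.2 : Fin n))]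
  rw [← add_smul, neg_one_pow_card_filter_lt_erase p.1.2 (mem_of_mem_erase p.2.2)
    (ne_of_mem_erase p.2.2).symm, zero_smul]

lemma finrank_range_boundaryMap_eq_hTop (hΔ : IsComplex Δ)
    (h0 : Function.Surjective (boundaryMap K Δ 0)) : ∀ m : ℕ,
    (∀ k < m, LinearMap.ker (boundaryMap K Δ k) ≤ LinearMap.range (boundaryMap K Δ (k + 1))) →
      (Module.finrank K (LinearMap.range (boundaryMap K Δ m)) : ℤ) = hTop Δ m
  | 0, _ => by
    rw [LinearMap.range_eq_top.2 h0, finrank_top, finrank_chains]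
    simp [hTop]
  | m + 1, hexact => by
    have hrange : LinearMap.range (boundaryMap K Δ (m + 1)) = LinearMap.ker (boundaryMap K Δ m) :=
      le_antisymm (LinearMap.range_le_ker_iff.2 (boundaryMap_comp_boundaryMap hΔ m))
        (hexact m m.lt_succ_self)
    rw [hrange, hTop_succ, ← finrank_range_boundaryMap_eq_hTop hΔ h0 m
      fun k hk => hexact k (hk.trans m.lt_succ_self), ← finrank_chains (K := K),
      ← LinearMap.finrank_range_add_finrank_ker (boundaryMap K Δ m)]
    push_cast
    ring

/-- Euler–Poincaré: with exact homology below the top, `h_{m+1} = dim ker ∂_m ≥ 0`. -/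
lemma hTop_succ_nonneg (hΔ : IsComplex Δ) (h0 : Function.Surjective (boundaryMap K Δ 0)) {m : ℕ}
    (hexact : ∀ k < m,
      LinearMap.ker (boundaryMap K Δ k) ≤ LinearMap.range (boundaryMap K Δ (k + 1))) :
    0 ≤ hTop Δ (m + 1) := by
  rw [hTop_succ, ← finrank_range_boundaryMap_eq_hTop hΔ h0 m hexact, ← finrank_chains (K := K),
    sub_nonneg]
  exact_mod_cast LinearMap.finrank_range_le _

lemma IsCMComplex.reducedHomologyZero (h : IsCMComplex K Δ) {i : ℤ} (hi : i < dimC Δ) :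
    ReducedHomologyZero K Δ i := by
  simpa [link_empty_s9] using h.2 ∅ h.1.1 i (by rwa [link_empty_s9])

lemma IsCMComplex.hTop_nonneg (h : IsCMComplex K Δ) {d : ℕ} (hd : (d : ℤ) - 1 ≤ dimC Δ) :
    0 ≤ hTop Δ d := by
  cases d with
  | zero => simp [hTop]
  | succ m =>
    refine hTop_succ_nonneg (K := K) h.1 ?_ fun k hk => ?_
    · have := h.reducedHomologyZero (i := -1) (by omega)
      rwa [ReducedHomologyZero, if_neg (by omega), if_pos rfl] at this
    · have := h.reducedHomologyZero (i := k) (by omega)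
      rwa [ReducedHomologyZero, if_neg (by omega), if_neg (by omega), Int.toNat_natCast] at this

end Homology

section GammaC

variable {r : ℕ}

lemma GammaC_eq_nonEdgeComplex (r : ℕ) : GammaC r = nonEdgeComplex (cycleGraph r) := rfl

lemma isPure_GammaC (hr : 4 ≤ r) : IsPure (GammaC r) (r - 2) :=
  isPure_nonEdgeComplex (by simp [Fin.ext_iff]) (cycleGraph_not_adj_zero_two hr)

lemma mem_GammaC_of_card_le (hr : 4 ≤ r) {F : Finset (Fin r)} (hF : F.card ≤ r - 3) :
    F ∈ GammaC r :=
  have : NeZero r := ⟨by omega⟩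
  mem_nonEdgeComplex_of_card_add_three_le (cycleGraph_cliqueFree_three hr) (by omega)

lemma ncard_facetSet_GammaC (hr : 4 ≤ r) : (facetSet (GammaC r)).ncard = r * (r - 3) / 2 := by
  have : NeZero r := ⟨by omega⟩
  have h := ncard_indepSetSet_two_cycleGraph_add (r := r) (by omega)
  rw [Nat.choose_two_eq_div_add (by omega)] at h
  rw [GammaC_eq_nonEdgeComplex,
    ncard_facetSet_nonEdgeComplex (by simp [Fin.ext_iff]) (cycleGraph_not_adj_zero_two hr)]
  omega

lemma hTop_GammaC (hr : 4 ≤ r) : hTop (GammaC r) (r - 2) = -1 := by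
  obtain ⟨s, rfl⟩ : ∃ s, r = s + 4 := ⟨r - 4, by omega⟩
  have hlow : hTop (GammaC (s + 4)) (s + 1) = (s + 3).choose (s + 1) := by
    rw [hTop, ← sum_range_neg_one_pow_sub_mul_choose]
    refine sum_congr rfl fun i hi => ?_
    rw [faceCount_eq_choose fun F hF => mem_GammaC_of_card_le hr (by have := mem_range.1 hi; omega)]
  have htop : (faceCount (GammaC (s + 4)) (s + 2) : ℤ) + (s + 4) = (s + 4).choose 2 := by
    have := ncard_indepSetSet_two_cycleGraph_add (r := s + 4) (by omega)
    rw [← faceCount_nonEdgeComplex_sub_two] at this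
    exact_mod_cast this
  rw [show s + 4 - 2 = s + 1 + 1 from rfl, hTop_succ, hlow,
    Nat.choose_symm_of_eq_add (show s + 3 = (s + 1) + 2 by omega)]
  rw [Nat.choose_succ_succ, Nat.choose_one_right] at htop
  push_cast at htop ⊢
  linarith

end GammaC

/-- The link complex `Γ` associated to a chordless `r`-cycle (`r ≥ 4`), whose facets are
the complements of the non-adjacent vertex pairs of the cycle, is pure of dimension
`r-3`, contains every vertex subset of cardinality at most `r-3`, has exactly
`r(r-3)/2` facets, has top `h`-vector entry `h_{r-2} = -1`, and hence is not
Cohen–Macaulay over any field. -/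
theorem cycle_link_complex_not_CM (r : ℕ) (hr : 4 ≤ r) :
    IsPure (GammaC r) (r - 2) ∧
    (∀ F : Finset (Fin r), F.card ≤ r - 3 → F ∈ GammaC r) ∧
    (facetSet (GammaC r)).ncard = r * (r - 3) / 2 ∧
    (∑ i ∈ Finset.range (r - 1), (-1 : ℤ) ^ (r - 2 - i) * (faceCount (GammaC r) i : ℤ))
      = -1 ∧
    ∀ (K : Type) (_ : Field K), ¬ IsCMComplex K (GammaC r) := by
  have hh := hTop_GammaC hr
  refine ⟨isPure_GammaC hr, fun F => mem_GammaC_of_card_le hr, ncard_facetSet_GammaC hr, ?_,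
    fun K _ hCM => ?_⟩
  · rwa [hTop, show r - 2 + 1 = r - 1 by omega] at hh
  · have := hCM.hTop_nonneg (isPure_GammaC hr).sub_one_le_dimC
    omega
end
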